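/- arXiv:2002.05456 — 6 statements merged into one kernel-verified Lean document; each statement's English description precedes it below -/
import Mathlib

section
/- (Stečkin) Let s = σ + it with 1 < σ ≤ 1.25 and let z ∈ ℂ with 0 < Re(z) < 1. Then F(s, z) - κ·F(σ₁(σ) + it, z) ≥ 0. -/
/-- `κ = 1/√5`. -/
noncomputable def κ : ℝ := 1 / Real.sqrt 5

/-- `σ₁(σ) = (1 + √(1 + 4σ²))/2`. -/
noncomputable def σ₁ (σ : ℝ) : ℝ := (1 + Real.sqrt (1 + 4 * σ ^ 2)) / 2

/-- `F(s,z) = Re(1/(s-z) + 1/(s-1+conj z))`. -/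
noncomputable def F (s z : ℂ) : ℝ := ((s - z)⁻¹ + (s - 1 + (starRingEnd ℂ) z)⁻¹).re

/-!
Write `x = Re z`, `v = (t - Im z)²`, `a = σ - x`, `b = σ - 1 + x`. Then
`F(σ + it, z) = a/(a² + v) + b/(b² + v) = (a + b)(ab + v)/((a² + v)(b² + v))`, and passing
from `σ` to `σ₁(σ)` shifts `a` and `b` by the same `δ = σ₁(σ) - σ`. The factor `a + b = 2σ - 1`
becomes `2σ₁(σ) - 1 = √(1 + 4σ²) ≤ √5 (2σ - 1)`, and the second factor decreases under the
shift as long as `(a - b)² ≤ δ(a + b + δ)`; here the right side equals `σ` because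
`σ₁(σ)² - σ₁(σ) = σ²`, while `(a - b)² = (1 - 2x)² < 1`.
-/

lemma F_ofReal_add_mul_I (σ t : ℝ) (z : ℂ) :
    F (σ + t * Complex.I) z =
      (σ - z.re) / ((σ - z.re) ^ 2 + (t - z.im) ^ 2)
        + (σ - 1 + z.re) / ((σ - 1 + z.re) ^ 2 + (t - z.im) ^ 2) := by
  simp only [F, Complex.add_re, Complex.inv_re, Complex.sub_re, Complex.add_im,
    Complex.sub_im, Complex.normSq_apply, Complex.ofReal_re, Complex.ofReal_im,
    Complex.mul_re, Complex.mul_im, Complex.I_re, Complex.I_im, Complex.one_re,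
    Complex.one_im, Complex.conj_re, Complex.conj_im, mul_zero, mul_one,
    sub_zero, add_zero, zero_add]
  ring

section ShiftedPair

variable {a b v δ : ℝ}

lemma div_sq_add_add_div_sq_add (ha : a ^ 2 + v ≠ 0) (hb : b ^ 2 + v ≠ 0) :
    a / (a ^ 2 + v) + b / (b ^ 2 + v) = (a + b) * ((a * b + v) / ((a ^ 2 + v) * (b ^ 2 + v))) := by
  field_simp
  ring

lemma div_mul_sq_add_shift_le (ha : 0 < a) (hb : 0 < b) (hv : 0 ≤ v) (hδ : 0 ≤ δ)
    (hab : (a - b) ^ 2 ≤ δ * (a + b + δ)) :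
    ((a + δ) * (b + δ) + v) / (((a + δ) ^ 2 + v) * ((b + δ) ^ 2 + v))
      ≤ (a * b + v) / ((a ^ 2 + v) * (b ^ 2 + v)) := by
  rw [div_le_div_iff₀ (by positivity) (by positivity)]
  -- The shift adds `d` to `ab` and `4d` to `(a + b)²`, so the difference of the sides factors.
  set d := δ * (a + b + δ)
  have hd : 0 ≤ d := by positivity
  have key : (a * b + v) * (((a + δ) ^ 2 + v) * ((b + δ) ^ 2 + v))
      - ((a + δ) * (b + δ) + v) * ((a ^ 2 + v) * (b ^ 2 + v))
      = d * ((a * b + v) ^ 2 + d * (a * b) + v * (d - (a - b) ^ 2)) := by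
    simp only [d]
    ring
  have : 0 ≤ d * ((a * b + v) ^ 2 + d * (a * b) + v * (d - (a - b) ^ 2)) := by
    have : 0 ≤ d - (a - b) ^ 2 := by linarith
    positivity
  linarith

lemma mul_div_sq_add_add_div_sq_add_shift_le {c : ℝ} (ha : 0 < a) (hb : 0 < b) (hv : 0 ≤ v)
    (hδ : 0 ≤ δ) (hab : (a - b) ^ 2 ≤ δ * (a + b + δ)) (hcδ : c * (a + b + 2 * δ) ≤ a + b) :
    c * ((a + δ) / ((a + δ) ^ 2 + v) + (b + δ) / ((b + δ) ^ 2 + v))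
      ≤ a / (a ^ 2 + v) + b / (b ^ 2 + v) := by
  have hpos : ∀ {y : ℝ}, 0 < y → y ^ 2 + v ≠ 0 := fun hy => by positivity
  rw [div_sq_add_add_div_sq_add (hpos ha) (hpos hb),
    div_sq_add_add_div_sq_add (hpos (by positivity)) (hpos (by positivity)), ← mul_assoc]
  exact mul_le_mul (by linarith) (div_mul_sq_add_shift_le ha hb hv hδ hab) (by positivity)
    (by linarith)

end ShiftedPair

lemma σ₁_sq_sub_self (σ : ℝ) : σ₁ σ ^ 2 - σ₁ σ = σ ^ 2 := by
  have := Real.sq_sqrt (by positivity : (0 : ℝ) ≤ 1 + 4 * σ ^ 2)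
  rw [σ₁]
  linarith

lemma two_mul_σ₁_sub_one (σ : ℝ) : 2 * σ₁ σ - 1 = Real.sqrt (1 + 4 * σ ^ 2) := by
  rw [σ₁]
  ring

lemma le_σ₁ (σ : ℝ) : σ ≤ σ₁ σ := by
  have : 2 * σ ≤ Real.sqrt (1 + 4 * σ ^ 2) :=
    Real.le_sqrt_of_sq_le (by nlinarith)
  linarith [two_mul_σ₁_sub_one σ]

lemma κ_mul_two_mul_σ₁_sub_one_le {σ : ℝ} (hσ : 1 ≤ σ) : κ * (2 * σ₁ σ - 1) ≤ 2 * σ - 1 := by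
  have h5 : 0 < Real.sqrt 5 := by positivity
  rw [two_mul_σ₁_sub_one, κ, one_div_mul_eq_div, div_le_iff₀ h5,
    ← Real.sqrt_sq (by linarith : 0 ≤ 2 * σ - 1), ← Real.sqrt_mul (by positivity)]
  -- `5(2σ - 1)² - (1 + 4σ²) = 4(4σ - 1)(σ - 1)`
  exact Real.sqrt_le_sqrt (by nlinarith)

theorem steckin_first_general (σ t : ℝ) (hσ : 1 < σ)
    (z : ℂ) (hz₀ : 0 < z.re) (hz₁ : z.re < 1) :
    0 ≤ F (σ + t * Complex.I) z - κ * F (σ₁ σ + t * Complex.I) z := by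
  rw [F_ofReal_add_mul_I, F_ofReal_add_mul_I, sub_nonneg]
  have hδ : 0 ≤ σ₁ σ - σ := sub_nonneg.2 (le_σ₁ σ)
  have hab : (σ - z.re - (σ - 1 + z.re)) ^ 2
      ≤ (σ₁ σ - σ) * (σ - z.re + (σ - 1 + z.re) + (σ₁ σ - σ)) := by
    nlinarith [σ₁_sq_sub_self σ]
  have hκ : κ * (σ - z.re + (σ - 1 + z.re) + 2 * (σ₁ σ - σ)) ≤ σ - z.re + (σ - 1 + z.re) := by
    convert κ_mul_two_mul_σ₁_sub_one_le hσ.le using 1 <;> ring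
  have := mul_div_sq_add_add_div_sq_add_shift_le (by linarith) (by linarith) (sq_nonneg (t - z.im))
    hδ hab hκ
  convert this using 4 <;> ring

/-- **Stečkin's lemma, first inequality**: for `s = σ + it` with `1 < σ ≤ 1.25`
and `0 < Re z < 1`, one has `F(s,z) - κ F(σ₁(σ) + it, z) ≥ 0`. -/
theorem steckin_first (σ t : ℝ) (hσ : 1 < σ) (hσ' : σ ≤ 1.25)
    (z : ℂ) (hz₀ : 0 < z.re) (hz₁ : z.re < 1) :
    0 ≤ F (σ + t * Complex.I) z - κ * F (σ₁ σ + t * Complex.I) z :=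
  steckin_first_general σ t hσ z hz₀ hz₁
end

section
/- For all real σ and β with 1 < σ ≤ 1.15 and 0.85 ≤ β ≤ 1, one has g(σ,β) := -1/(σ-1+β) + κ/(σ₁(σ)-β) + κ/(σ₁(σ)-1+β) ≤ 0; consequently -1/(σ-β) - 1/(σ-1+β) + κ/(σ₁(σ)-β) + κ/(σ₁(σ)-1+β) ≤ -1/(σ-β). -/
/-!
Since `σ₁(σ)` is the positive root of `x² - x = σ²`, the two `κ`-terms add up to
`κ √(1 + 4σ²) / (σ² + β - β²)`. After clearing denominators and squaring, `g ≤ 0` becomes the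
polynomial inequality `(1 + 4σ²)(σ - 1 + β)² ≤ 5 (σ² + β - β²)²`, whose difference, written in
`u = σ - 1` and `v = 1 - β`, is visibly nonnegative for `u ≥ 0` and `0 ≤ v ≤ 1`.
-/

open Real

theorem σ₁_sub_mul_σ₁_sub_one_add (σ β : ℝ) :
    (σ₁ σ - β) * (σ₁ σ - 1 + β) = σ ^ 2 + β - β ^ 2 := by
  have h := sq_sqrt (by positivity : (0 : ℝ) ≤ 1 + 4 * σ ^ 2)
  unfold σ₁
  linear_combination h / 4

theorem one_div_σ₁_sub_add_one_div {σ β : ℝ} (h : σ ^ 2 + β - β ^ 2 ≠ 0) :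
    1 / (σ₁ σ - β) + 1 / (σ₁ σ - 1 + β) = √(1 + 4 * σ ^ 2) / (σ ^ 2 + β - β ^ 2) := by
  rw [← σ₁_sub_mul_σ₁_sub_one_add] at h ⊢
  rw [div_add_div _ _ (left_ne_zero_of_mul h) (right_ne_zero_of_mul h)]
  congr 1
  unfold σ₁
  ring

theorem one_add_four_mul_sq_mul_sq_le {σ β : ℝ} (hσ : 1 ≤ σ) (hβ : 0 ≤ β) (hβ' : β ≤ 1) :
    (1 + 4 * σ ^ 2) * (σ - 1 + β) ^ 2 ≤ 5 * (σ ^ 2 + β - β ^ 2) ^ 2 := by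
  obtain ⟨u, hu, rfl⟩ : ∃ u ≥ 0, σ = 1 + u := ⟨σ - 1, by linarith, by ring⟩
  obtain ⟨v, hv, rfl⟩ : ∃ v ≥ 0, β = 1 - v := ⟨1 - β, by linarith, by ring⟩
  have hA : 0 ≤ u * (2 + 5 * u + 4 * u ^ 2 + u ^ 3) := by positivity
  have hB : 0 ≤ v * (1 - v) * (10 * (2 + v) + 28 * u + 14 * u ^ 2) :=
    mul_nonneg (mul_nonneg hv hβ) (by positivity)
  have hC : 0 ≤ v * (5 * v ^ 3 + 18 * u + 20 * u ^ 2 + 8 * u ^ 3) := by positivity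
  linear_combination hA + hB + hC

theorem sqrt_one_add_four_mul_sq_mul_le {σ β : ℝ} (hσ : 1 ≤ σ) (hβ : 0 ≤ β) (hβ' : β ≤ 1) :
    √(1 + 4 * σ ^ 2) * (σ - 1 + β) ≤ √5 * (σ ^ 2 + β - β ^ 2) := by
  have hA : 0 ≤ σ - 1 + β := by linarith
  have hP : 0 ≤ σ ^ 2 + β - β ^ 2 := by nlinarith
  calc √(1 + 4 * σ ^ 2) * (σ - 1 + β) = √((1 + 4 * σ ^ 2) * (σ - 1 + β) ^ 2) := by
        rw [sqrt_mul (by positivity), sqrt_sq hA]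
    _ ≤ √(5 * (σ ^ 2 + β - β ^ 2) ^ 2) :=
        sqrt_le_sqrt (one_add_four_mul_sq_mul_sq_le hσ hβ hβ')
    _ = √5 * (σ ^ 2 + β - β ^ 2) := by rw [sqrt_mul (by norm_num), sqrt_sq hP]

theorem κ_div_σ₁_sub_add_κ_div_le {σ β : ℝ} (hσ : 1 < σ) (hβ : 0 ≤ β) (hβ' : β ≤ 1) :
    κ / (σ₁ σ - β) + κ / (σ₁ σ - 1 + β) ≤ 1 / (σ - 1 + β) := by
  have hA : 0 < σ - 1 + β := by linarith
  have hP : 0 < σ ^ 2 + β - β ^ 2 := by nlinarith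
  rw [← mul_one_div κ, ← mul_one_div κ, ← mul_add, one_div_σ₁_sub_add_one_div hP.ne', κ,
    div_mul_div_comm, one_mul, div_le_div_iff₀ (by positivity) hA, one_mul]
  exact sqrt_one_add_four_mul_sq_mul_le hσ.le hβ hβ'

theorem g_nonpos_general (σ β : ℝ) (hσ : 1 < σ)
    (hβ : 0.85 ≤ β) (hβ' : β ≤ 1) :
    (-(1 / (σ - 1 + β)) + κ / (σ₁ σ - β) + κ / (σ₁ σ - 1 + β) ≤ 0) ∧
    (-(1 / (σ - β)) - 1 / (σ - 1 + β) + κ / (σ₁ σ - β) + κ / (σ₁ σ - 1 + β) ≤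
      -(1 / (σ - β))) := by
  have h := κ_div_σ₁_sub_add_κ_div_le hσ (by linarith) hβ'
  exact ⟨by linarith, by linarith⟩

/-- For `1 < σ ≤ 1.15` and `0.85 ≤ β ≤ 1`,
`g(σ,β) = -1/(σ-1+β) + κ/(σ₁(σ)-β) + κ/(σ₁(σ)-1+β) ≤ 0`, and hence
`-1/(σ-β) - 1/(σ-1+β) + κ/(σ₁(σ)-β) + κ/(σ₁(σ)-1+β) ≤ -1/(σ-β)`. -/
theorem g_nonpos (σ β : ℝ) (hσ : 1 < σ) (hσ' : σ ≤ 1.15)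
    (hβ : 0.85 ≤ β) (hβ' : β ≤ 1) :
    (-(1 / (σ - 1 + β)) + κ / (σ₁ σ - β) + κ / (σ₁ σ - 1 + β) ≤ 0) ∧
    (-(1 / (σ - β)) - 1 / (σ - 1 + β) + κ / (σ₁ σ - β) + κ / (σ₁ σ - 1 + β) ≤
      -(1 / (σ - β))) :=
  g_nonpos_general σ β hσ hβ hβ'
end

section
/- For all real σ with 1 < σ ≤ 1.15 and all real t ≥ 1, the values Σ_k(σ,t) for k = 1, 2, ..., 16 are bounded above, respectively, by: 0.23445352, 0.06869804, 0.02783858, 0.01427867, 0.0085573, 0.00568194, 0.00404715, 0.00303134, 0.00235718, 0.00188669, 0.00154513, 0.00128917, 0.0010924, 0.00093759, 0.00081374, 0.00071303. -/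
/-- `Σ_k(σ,t)`. -/
noncomputable def Sigk (k : ℕ) (σ t : ℝ) : ℝ :=
  σ / (σ ^ 2 + k ^ 2 * t ^ 2) + (σ - 1) / ((σ - 1) ^ 2 + k ^ 2 * t ^ 2) -
    κ * σ₁ σ / ((σ₁ σ) ^ 2 + k ^ 2 * t ^ 2) -
    κ * (σ₁ σ - 1) / ((σ₁ σ - 1) ^ 2 + k ^ 2 * t ^ 2)

/-- Admissible values `𝓑_{0.15}(k)` for `k = 1, …, 16` (Table 1). -/
noncomputable def B015 : ℕ → ℝ
  | 1 => 0.23445352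
  | 2 => 0.06869804
  | 3 => 0.02783858
  | 4 => 0.01427867
  | 5 => 0.0085573
  | 6 => 0.00568194
  | 7 => 0.00404715
  | 8 => 0.00303134
  | 9 => 0.00235718
  | 10 => 0.00188669
  | 11 => 0.00154513
  | 12 => 0.00128917
  | 13 => 0.0010924
  | 14 => 0.00093759
  | 15 => 0.00081374
  | 16 => 0.00071303
  | _ => 0

/-!
Since `σ₁(σ₁ - 1) = σ²` and `2σ₁ - 1 = √(1 + 4σ²)`, the two `κ`-terms of `Σ_k` merge into a single
term `κ√(1 + 4σ²) · P(σ² + u)`, where `P(x) = x / (x² + u)` and `u = k²t²`. In this form `Σ_k` is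
antitone in `u` (so `t = 1` is the worst case) and antitone in the coefficient `κ√(1 + 4σ²)`.
Replacing that coefficient by an affine minorant which is sharp at `σ = 1.15` makes the function
monotone in `σ` on `[1, 1.15]`, by a derivative estimate. The sixteen bounds thus reduce to exact
rational evaluations at `σ = 1.15`, `t = 1`.
-/

/-- `x / (x² + y²) = Re (1 / (x + iy))`, written with `u = y²`. -/
noncomputable def poisson (x u : ℝ) : ℝ := x / (x ^ 2 + u)

noncomputable def reducedSigk (L σ u : ℝ) : ℝ :=
  poisson σ u + poisson (σ - 1) u - L * poisson (σ ^ 2 + u) u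

theorem poisson_add_poisson_sub_one (c u : ℝ) (hc : c ^ 2 + u ≠ 0) (hc' : (c - 1) ^ 2 + u ≠ 0) :
    poisson c u + poisson (c - 1) u = (2 * c - 1) * poisson (c * (c - 1) + u) u := by
  have hden : (c * (c - 1) + u) ^ 2 + u = (c ^ 2 + u) * ((c - 1) ^ 2 + u) := by ring
  unfold poisson
  rw [hden, div_add_div _ _ hc hc', mul_div_assoc']
  congr 1
  ring

theorem σ₁_mul_σ₁_sub_one (σ : ℝ) : σ₁ σ * (σ₁ σ - 1) = σ ^ 2 := by
  have h := Real.sq_sqrt (show (0 : ℝ) ≤ 1 + 4 * σ ^ 2 by positivity)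
  unfold σ₁
  linear_combination h / 4

theorem Sigk_eq_reducedSigk (k : ℕ) (σ t : ℝ) (hu : 0 < (k : ℝ) ^ 2 * t ^ 2) :
    Sigk k σ t = reducedSigk (κ * √(1 + 4 * σ ^ 2)) σ (k ^ 2 * t ^ 2) := by
  have hpair := poisson_add_poisson_sub_one (σ₁ σ) (k ^ 2 * t ^ 2) (by positivity) (by positivity)
  rw [σ₁_mul_σ₁_sub_one, show 2 * σ₁ σ - 1 = √(1 + 4 * σ ^ 2) by unfold σ₁; ring] at hpair
  unfold Sigk reducedSigk
  simp only [poisson] at hpair ⊢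
  linear_combination (-κ) * hpair

theorem antitone_reducedSigk_coeff (σ : ℝ) {u : ℝ} (hu : 0 ≤ u) :
    Antitone fun L ↦ reducedSigk L σ u := by
  intro L L' h
  have : 0 ≤ poisson (σ ^ 2 + u) u := by unfold poisson; positivity
  simp only [reducedSigk]
  nlinarith

theorem poisson_sub_poisson (x : ℝ) {u v : ℝ} (hu : x ^ 2 + u ≠ 0) (hv : x ^ 2 + v ≠ 0) :
    poisson x u - poisson x v = x * (v - u) / ((x ^ 2 + u) * (x ^ 2 + v)) := by
  unfold poisson
  rw [div_sub_div _ _ hu hv]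
  ring

theorem poisson_add_sub_poisson_add_le {s u v : ℝ} (hs : 0 < s) (hu : s ≤ 2 * u) (huv : u ≤ v) :
    poisson (s + u) u - poisson (s + v) v ≤ (v - u) / ((s + u) * (s + v)) := by
  have hv : s ≤ 2 * v := by linarith
  have hu0 : 0 < u := by linarith
  have hv0 : 0 < v := by linarith
  have hdiff : poisson (s + u) u - poisson (s + v) v =
      (v - u) * ((s + u) * (s + v) + s) / (((s + u) ^ 2 + u) * ((s + v) ^ 2 + v)) := by
    unfold poisson
    rw [div_sub_div _ _ (by positivity) (by positivity)]
    ring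
  have hden : ((s + u) * (s + v) + s) * ((s + u) * (s + v)) ≤
      ((s + u) ^ 2 + u) * ((s + v) ^ 2 + v) := by
    nlinarith [mul_le_mul_of_nonneg_left hu (sq_nonneg (s + v)),
      mul_le_mul_of_nonneg_left hv (sq_nonneg (s + u)), sq_nonneg (u - v)]
  rw [hdiff, div_le_div_iff₀ (by positivity) (by positivity), mul_assoc]
  exact mul_le_mul_of_nonneg_left hden (by linarith)

/-- For `L ≤ 2σ - 1 = σ + (σ - 1)` the decrease of the two `poisson` terms beats the decrease of
the `L`-term. -/
theorem antitoneOn_reducedSigk {L σ : ℝ} (hσ : 1 ≤ σ) (hL : 0 ≤ L) (hL' : L ≤ 2 * σ - 1) :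
    AntitoneOn (reducedSigk L σ) (Set.Ici (σ ^ 2 / 2)) := by
  intro u hu v hv huv
  rw [Set.mem_Ici] at hu hv
  have hu0 : 0 < u := by nlinarith
  have hv0 : 0 < v := by linarith
  set A := (σ ^ 2 + u) * (σ ^ 2 + v)
  have hA : 0 < A := by positivity
  have h₁ := poisson_sub_poisson σ (u := u) (v := v) (by positivity) (by positivity)
  have h₂ := poisson_sub_poisson (σ - 1) (u := u) (v := v) (by positivity) (by positivity)
  have h₃ := poisson_add_sub_poisson_add_le (s := σ ^ 2) (by positivity) (by linarith) huv
  have hy : (σ - 1) * (v - u) / A ≤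
      (σ - 1) * (v - u) / (((σ - 1) ^ 2 + u) * ((σ - 1) ^ 2 + v)) := by
    apply div_le_div_of_nonneg_left (mul_nonneg (by linarith) (by linarith)) (by positivity)
    have : (σ - 1) ^ 2 ≤ σ ^ 2 := by nlinarith
    exact mul_le_mul (by linarith) (by linarith) (by positivity) (by positivity)
  have hL₃ : L * (poisson (σ ^ 2 + u) u - poisson (σ ^ 2 + v) v) ≤ (2 * σ - 1) * ((v - u) / A) := by
    calc _ ≤ L * ((v - u) / A) := by gcongr
      _ ≤ _ := by gcongr
  unfold reducedSigk
  rw [mul_div_assoc] at h₁ hy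
  nlinarith

theorem hasDerivAt_poisson (u x : ℝ) (h : x ^ 2 + u ≠ 0) :
    HasDerivAt (poisson · u) ((u - x ^ 2) / (x ^ 2 + u) ^ 2) x := by
  refine ((hasDerivAt_id' x).div ((hasDerivAt_pow 2 x).add_const u) h).congr_deriv ?_
  push_cast
  ring

theorem poisson_sq_add_le {σ u : ℝ} (hσ : 1 ≤ σ) (hσ' : σ ≤ 23 / 20) (hu : 1 ≤ u) :
    poisson (σ ^ 2 + u) u ≤
      (u - σ ^ 2) / (σ ^ 2 + u) ^ 2 + (u - (σ - 1) ^ 2) / ((σ - 1) ^ 2 + u) ^ 2 := by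
  have hP : poisson (σ ^ 2 + u) u ≤ 1 / (σ ^ 2 + u) := by
    unfold poisson
    rw [div_le_div_iff₀ (by positivity) (by positivity)]
    nlinarith
  have hy : 2 * σ ^ 2 / (σ ^ 2 + u) ^ 2 ≤ (u - (σ - 1) ^ 2) / ((σ - 1) ^ 2 + u) ^ 2 := by
    rw [div_le_div_iff₀ (by positivity) (by positivity)]
    have hs : σ ^ 2 ≤ 4 / 3 := by nlinarith
    have hz : (σ - 1) ^ 2 ≤ 9 / 400 := by nlinarith
    have h₁ : (σ - 1) ^ 2 * (σ ^ 2 + u) ^ 2 ≤ 9 / 400 * (7 / 3 * u) ^ 2 := by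
      gcongr
      linarith
    have h₂ : σ ^ 2 * (σ - 1) ^ 2 * (2 * (σ - 1) ^ 2 + 4 * u) ≤
        4 / 3 * (9 / 400) * (2 * (9 / 400) + 4 * u) := by
      gcongr
    have h₃ : u ^ 2 ≤ u ^ 3 := pow_le_pow_right₀ hu (by norm_num)
    have h₄ : u ≤ u ^ 2 := by nlinarith
    nlinarith [mul_nonneg (sq_nonneg (σ ^ 2)) (by linarith : (0 : ℝ) ≤ u)]
  calc poisson (σ ^ 2 + u) u ≤ 1 / (σ ^ 2 + u) := hP
    _ = (u - σ ^ 2) / (σ ^ 2 + u) ^ 2 + 2 * σ ^ 2 / (σ ^ 2 + u) ^ 2 := by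
      field_simp
      ring
    _ ≤ _ := by gcongr

/-- The derivative in `σ` is `P'(σ) + P'(σ - 1) - b P(σ² + u) - 2σ(p + bσ) P'(σ² + u)`; the last
term is nonnegative because `P` decreases beyond `√u`, and `poisson_sq_add_le` controls the rest. -/
theorem monotoneOn_reducedSigk_affine {p b u : ℝ} (hb : 0 ≤ b) (hb' : b ≤ 1) (hp : 0 ≤ p + b)
    (hu : 1 ≤ u) :
    MonotoneOn (fun σ ↦ reducedSigk (p + b * σ) σ u) (Set.Icc 1 (23 / 20)) := by
  have hderiv : ∀ σ, HasDerivAt (fun σ ↦ reducedSigk (p + b * σ) σ u)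
      ((u - σ ^ 2) / (σ ^ 2 + u) ^ 2 + (u - (σ - 1) ^ 2) / ((σ - 1) ^ 2 + u) ^ 2 -
        (b * poisson (σ ^ 2 + u) u +
          (p + b * σ) * ((u - (σ ^ 2 + u) ^ 2) / ((σ ^ 2 + u) ^ 2 + u) ^ 2 * (2 * σ)))) σ := by
    intro σ
    have h₁ := hasDerivAt_poisson u σ (by positivity)
    have h₂ := (hasDerivAt_poisson u (σ - 1) (by positivity)).comp_sub_const σ 1
    have h₃ := (hasDerivAt_poisson u (σ ^ 2 + u) (by positivity)).comp σ
      ((hasDerivAt_pow 2 σ).add_const u)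
    have hℓ := ((hasDerivAt_id' σ).const_mul b).const_add p
    refine ((h₁.add h₂).sub (hℓ.mul h₃)).congr_deriv ?_
    simp only [Function.comp_apply]
    push_cast
    ring
  refine monotoneOn_of_hasDerivWithinAt_nonneg (convex_Icc _ _)
    (fun σ _ ↦ (hderiv σ).continuousAt.continuousWithinAt)
    (fun σ _ ↦ (hderiv σ).hasDerivWithinAt) ?_
  rintro σ hσ
  rw [interior_Icc] at hσ
  obtain ⟨hσ₁, hσ₂⟩ := hσ
  have hP := poisson_sq_add_le hσ₁.le hσ₂.le hu
  have hP0 : 0 ≤ poisson (σ ^ 2 + u) u := by unfold poisson; positivity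
  have hdecr : (u - (σ ^ 2 + u) ^ 2) / ((σ ^ 2 + u) ^ 2 + u) ^ 2 ≤ 0 :=
    div_nonpos_of_nonpos_of_nonneg (by nlinarith) (by positivity)
  have hℓ : 0 ≤ (p + b * σ) * (2 * σ) := mul_nonneg (by nlinarith) (by linarith)
  nlinarith [mul_le_mul_of_nonneg_right hb' hP0]

/-- An affine minorant of `κ√(1 + 4σ²)` on `σ ≤ 1.15`, tangent-like at `σ = 1.15`, where it
undershoots `√1.258` by less than `2·10⁻⁹`: this is what keeps the corner values below `B015`. -/
noncomputable def ℓ (σ : ℝ) : ℝ := 17826099 / 100000000 + 8203 / 10000 * σ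

theorem ℓ_le_κ_mul_sqrt {σ : ℝ} (h : σ ≤ 23 / 20) : ℓ σ ≤ κ * √(1 + 4 * σ ^ 2) := by
  rw [κ, one_div_mul_eq_div, ← Real.sqrt_div' _ (by norm_num : (0 : ℝ) ≤ 5)]
  apply Real.le_sqrt_of_sq_le
  unfold ℓ
  nlinarith

theorem reducedSigk_corner_le_B015 (k : ℕ) (hk1 : 1 ≤ k) (hk2 : k ≤ 16) :
    reducedSigk (ℓ (23 / 20)) (23 / 20) (k ^ 2) ≤ B015 k := by
  interval_cases k <;> norm_num [reducedSigk, poisson, ℓ, B015]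

/-- For `1 < σ ≤ 1.15`, `t ≥ 1` and `1 ≤ k ≤ 16`, `Σ_k(σ,t) ≤ 𝓑_{0.15}(k)`. -/
theorem Sigk_le_B015 (σ t : ℝ) (hσ : 1 < σ) (hσ' : σ ≤ 1.15) (ht : 1 ≤ t) :
    ∀ k : ℕ, 1 ≤ k → k ≤ 16 → Sigk k σ t ≤ B015 k := by
  intro k hk1 hk2
  have hσ₂ : σ ≤ 23 / 20 := by norm_num at hσ'; linarith
  have hk : (1 : ℝ) ≤ k := by exact_mod_cast hk1
  have hu : (k : ℝ) ^ 2 ≤ k ^ 2 * t ^ 2 := le_mul_of_one_le_right (by positivity) (by nlinarith)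
  have hk2σ : σ ^ 2 / 2 ≤ (k : ℝ) ^ 2 := by nlinarith
  calc Sigk k σ t = reducedSigk (κ * √(1 + 4 * σ ^ 2)) σ (k ^ 2 * t ^ 2) :=
        Sigk_eq_reducedSigk k σ t (by positivity)
    _ ≤ reducedSigk (ℓ σ) σ (k ^ 2 * t ^ 2) :=
        antitone_reducedSigk_coeff σ (by positivity) (ℓ_le_κ_mul_sqrt hσ₂)
    _ ≤ reducedSigk (ℓ σ) σ (k ^ 2) :=
        antitoneOn_reducedSigk hσ.le (by unfold ℓ; linarith) (by unfold ℓ; linarith)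
          hk2σ (hk2σ.trans hu) hu
    _ ≤ reducedSigk (ℓ (23 / 20)) (23 / 20) (k ^ 2) :=
        monotoneOn_reducedSigk_affine (by norm_num) (by norm_num) (by norm_num) (by nlinarith)
          ⟨hσ.le, hσ₂⟩ ⟨by norm_num, le_rfl⟩ hσ₂
    _ ≤ B015 k := reducedSigk_corner_le_B015 k hk1 hk2
end

section
/- (McCurley-type bound) For every integer k ≥ 1, every real t ≥ 1, every real σ with 1 < σ ≤ 1.15, and every δ ∈ {0,1}, one has (1/2)·Re( ψ((σ + ikt + δ)/2) - κ·ψ((σ₁(σ) + ikt + δ)/2) ) ≤ ((1-κ)/2)·log(kt/2) + Ξ(σ,k,t,δ) + (1/(2k))·(π/2 - arctan((1+δ)/k)) + (κ/(2k))·(π/2 - arctan(((1+√5)/2 + δ)/k)), where ψ(z) = Γ'(z)/Γ(z) is the logarithmic derivative of the complex Gamma function. -/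
/-!
Write `R(z) = ψ(z) - (log z - 1/(2z))`. The recursion `ψ(z+1) = ψ(z) + 1/z` makes
`R(z) - R(z+1)` the error of the trapezoidal rule for `∫_z^{z+1} dw/w`, namely
`∫₀¹ (u - 1/2)/(z+u)² du`. Since `R(x+N) → 0` for real `x` (log-convexity of `Γ` squeezes
`ψ(x+N)` between harmonic numbers), analytic continuation gives `R(z) = ∑ₙ (R(z+n) - R(z+n+1))`
on `Re z > 0`, and `|u - 1/2| ≤ 1/2` bounds it by `∫₀^∞ du / (2|z+u|²) = (π/2 - arctan(x/y))/(2y)`.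
At `z = (a + ikt)/2` this pins `Re ψ(z)` to `log |z| - a/(a² + k²t²)` up to that error, which
only grows when `a` decreases to `1 + δ` resp. `(1+√5)/2 + δ` and `kt` to `k`, because
`arctan x / x` is decreasing.
-/

open Complex

/-- `Ξ(σ,k,t,δ)`. -/
noncomputable def Xi (σ : ℝ) (k : ℕ) (t δ : ℝ) : ℝ :=
  1 / 4 * Real.log (1 + ((σ + δ) / (k * t)) ^ 2) -
    κ / 4 * Real.log (1 + ((σ₁ σ + δ) / (k * t)) ^ 2) -
    (σ + δ) / (2 * ((σ + δ) ^ 2 + k ^ 2 * t ^ 2)) +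
    κ * (σ₁ σ + δ) / (2 * ((σ₁ σ + δ) ^ 2 + k ^ 2 * t ^ 2))

/-- The digamma function `ψ = Γ'/Γ` on the complex plane. -/
noncomputable def ψc (z : ℂ) : ℂ := deriv Complex.Gamma z / Complex.Gamma z

open Set Filter Topology
open scoped Real

lemma div_one_add_sq_le_arctan {x : ℝ} (hx : 0 ≤ x) : x / (1 + x ^ 2) ≤ Real.arctan x := by
  have hderiv (y : ℝ) : HasDerivAt (fun w => Real.arctan w - w / (1 + w ^ 2))
      (2 * y ^ 2 / (1 + y ^ 2) ^ 2) y := by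
    have hy : 1 + y ^ 2 ≠ 0 := by positivity
    refine ((Real.hasDerivAt_arctan y).sub ((hasDerivAt_id' y).div
      ((hasDerivAt_pow 2 y).const_add 1) hy)).congr_deriv ?_
    field_simp
    ring
  have hmono : MonotoneOn (fun w => Real.arctan w - w / (1 + w ^ 2)) (Ici 0) :=
    monotoneOn_of_deriv_nonneg (convex_Ici 0)
      (fun y _ => (hderiv y).continuousAt.continuousWithinAt)
      (fun y _ => (hderiv y).differentiableAt.differentiableWithinAt)
      (fun y _ => (hderiv y).deriv ▸ by positivity)
  simpa using hmono self_mem_Ici hx hx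

lemma antitoneOn_arctan_div_self : AntitoneOn (fun x => Real.arctan x / x) (Ioi 0) := by
  have hderiv {x : ℝ} (hx : 0 < x) : HasDerivAt (fun x => Real.arctan x / x)
      ((x / (1 + x ^ 2) - Real.arctan x) / x ^ 2) x := by
    refine ((Real.hasDerivAt_arctan x).div (hasDerivAt_id' x) hx.ne').congr_deriv ?_
    ring
  refine antitoneOn_of_deriv_nonpos (convex_Ioi 0)
    (fun x hx => (hderiv hx).continuousAt.continuousWithinAt)
    (fun x hx => (hderiv (interior_subset hx)).differentiableAt.differentiableWithinAt)
    (fun x hx => ?_)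
  rw [interior_Ioi] at hx
  rw [(hderiv hx).deriv]
  exact div_nonpos_of_nonpos_of_nonneg (sub_nonpos.2 (div_one_add_sq_le_arctan (le_of_lt hx)))
    (sq_nonneg x)

lemma pi_div_two_sub_arctan_div_le {a c Y k : ℝ} (hk : 0 < k) (hkY : k ≤ Y) (hc : 0 < c)
    (hca : c ≤ a) :
    (π / 2 - Real.arctan (a / Y)) / Y ≤ (π / 2 - Real.arctan (c / k)) / k := by
  have hY : 0 < Y := hk.trans_le hkY
  have hcomp {y : ℝ} (hy : 0 < y) :
      (π / 2 - Real.arctan (c / y)) / y = Real.arctan (y / c) / (y / c) / c := by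
    rw [← Real.arctan_inv_of_pos (by positivity), inv_div]
    field_simp
  calc (π / 2 - Real.arctan (a / Y)) / Y ≤ (π / 2 - Real.arctan (c / Y)) / Y := by
        gcongr
    _ = Real.arctan (Y / c) / (Y / c) / c := hcomp hY
    _ ≤ Real.arctan (k / c) / (k / c) / c := by
        gcongr ?_ / c
        exact antitoneOn_arctan_div_self (mem_Ioi.2 (by positivity)) (mem_Ioi.2 (by positivity))
          (by gcongr)
    _ = (π / 2 - Real.arctan (c / k)) / k := (hcomp hk).symm

lemma hasSum_sub_of_monotone_of_tendsto {f : ℕ → ℝ} {l : ℝ} (hf : Monotone f)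
    (hl : Tendsto f atTop (𝓝 l)) : HasSum (fun n => f (n + 1) - f n) (l - f 0) := by
  rw [hasSum_iff_tendsto_nat_of_nonneg (fun n => sub_nonneg.2 (hf n.le_succ))]
  simpa only [Finset.sum_range_sub] using hl.sub_const (f 0)

lemma hasSum_arctan_sub_arctan (x : ℝ) {y : ℝ} (hy : 0 < y) :
    HasSum (fun n : ℕ => Real.arctan ((x + n + 1) / y) - Real.arctan ((x + n) / y))
      (π / 2 - Real.arctan (x / y)) := by
  have hlim : Tendsto (fun n : ℕ => Real.arctan ((x + n) / y)) atTop (𝓝 (π / 2)) :=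
    (Real.tendsto_arctan_atTop.mono_right nhdsWithin_le_nhds).comp <|
      (tendsto_atTop_add_const_left _ x tendsto_natCast_atTop_atTop).atTop_div_const hy
  convert hasSum_sub_of_monotone_of_tendsto (fun m n hmn => Real.arctan_strictMono.monotone
    (by gcongr : (x + m) / y ≤ (x + n) / y)) hlim using 2 with n
  · push_cast; ring_nf
  · simp

lemma integral_inv_add_sq_add_sq (x : ℝ) {y : ℝ} (hy : 0 < y) :
    ∫ u in (0 : ℝ)..1, ((x + u) ^ 2 + y ^ 2)⁻¹ =
      (Real.arctan ((x + 1) / y) - Real.arctan (x / y)) / y := by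
  have hderiv (u : ℝ) : HasDerivAt (fun u => Real.arctan ((x + u) / y) / y)
      ((x + u) ^ 2 + y ^ 2)⁻¹ u := by
    refine (((Real.hasDerivAt_arctan _).comp u
      (((hasDerivAt_id' u).const_add x).div_const y)).div_const y).congr_deriv ?_
    field_simp
    ring
  have hcont : Continuous fun u : ℝ => ((x + u) ^ 2 + y ^ 2)⁻¹ :=
    Continuous.inv₀ (by fun_prop) fun u => by positivity
  rw [intervalIntegral.integral_eq_sub_of_hasDerivAt (fun u _ => hderiv u)
    (hcont.intervalIntegrable 0 1)]
  simp [sub_div]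

noncomputable def trapezoidError (w : ℂ) : ℂ :=
  log (w + 1) - log w - (w⁻¹ + (w + 1)⁻¹) / 2

section TrapezoidError

variable {w : ℂ}

lemma re_add_ofReal_pos (hw : 0 < w.re) {u : ℝ} (hu : 0 ≤ u) : 0 < (w + u).re := by
  simpa using add_pos_of_pos_of_nonneg hw hu

lemma add_ofReal_ne_zero (hw : 0 < w.re) {u : ℝ} (hu : 0 ≤ u) : w + u ≠ 0 := fun h => by
  simpa [h] using re_add_ofReal_pos hw hu

lemma trapezoidError_eq_integral (hw : 0 < w.re) :
    trapezoidError w = ∫ u in (0 : ℝ)..1, ((u - 1 / 2 : ℝ) : ℂ) * ((w + u) ^ 2)⁻¹ := by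
  have hderiv {u : ℝ} (hu : u ∈ Icc (0 : ℝ) 1) :
      HasDerivAt (fun u : ℝ => log (w + u) + ((1 / 2 - u : ℝ) : ℂ) * (w + u)⁻¹)
        (((u - 1 / 2 : ℝ) : ℂ) * ((w + u) ^ 2)⁻¹) u := by
    have hne := add_ofReal_ne_zero hw hu.1
    have hshift : HasDerivAt (fun u : ℝ => w + u) 1 u :=
      (hasDerivAt_id' u).ofReal_comp.const_add w
    have hlog := (hasDerivAt_log
      (mem_slitPlane_iff.2 (.inl (re_add_ofReal_pos hw hu.1)))).comp u hshift
    have hcoef : HasDerivAt (fun u : ℝ => ((1 / 2 - u : ℝ) : ℂ)) (-1) u := by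
      simpa using ((hasDerivAt_id' u).const_sub (1 / 2 : ℝ)).ofReal_comp
    refine (hlog.add (hcoef.mul ((hasDerivAt_inv hne).comp u hshift))).congr_deriv ?_
    simp only [Function.comp_apply]
    push_cast
    field_simp
    ring
  have hcont : ContinuousOn (fun u : ℝ => ((u - 1 / 2 : ℝ) : ℂ) * ((w + u) ^ 2)⁻¹) (Icc 0 1) :=
    ContinuousOn.mul (by fun_prop)
      (ContinuousOn.inv₀ (by fun_prop) fun u hu => pow_ne_zero 2 (add_ofReal_ne_zero hw hu.1))
  rw [intervalIntegral.integral_eq_sub_of_hasDerivAt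
    (fun u hu => hderiv (by rwa [uIcc_of_le zero_le_one] at hu))
    (hcont.intervalIntegrable_of_Icc zero_le_one)]
  simp only [trapezoidError, ofReal_one, ofReal_zero, add_zero]
  push_cast
  ring

lemma norm_trapezoidError_integrand_le {u : ℝ} (hu : u ∈ Icc (0 : ℝ) 1) :
    ‖((u - 1 / 2 : ℝ) : ℂ) * ((w + u) ^ 2)⁻¹‖ ≤ ((w.re + u) ^ 2 + w.im ^ 2)⁻¹ / 2 := by
  have hnorm : ‖w + u‖ ^ 2 = (w.re + u) ^ 2 + w.im ^ 2 := by
    rw [Complex.sq_norm, normSq_apply]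
    simp only [add_re, add_im, ofReal_re, ofReal_im, add_zero]
    ring
  have hhalf : |u - 1 / 2| ≤ 1 / 2 := abs_le.2 ⟨by linarith [hu.1], by linarith [hu.2]⟩
  rw [norm_mul, norm_inv, norm_pow, hnorm, norm_real, Real.norm_eq_abs, mul_comm]
  exact (mul_le_mul_of_nonneg_left hhalf (by positivity)).trans_eq (by ring)

lemma norm_trapezoidError_le_integral (hw : 0 < w.re) :
    ‖trapezoidError w‖ ≤ ∫ u in (0 : ℝ)..1, ((w.re + u) ^ 2 + w.im ^ 2)⁻¹ / 2 := by
  have hcont : ContinuousOn (fun u : ℝ => ((w.re + u) ^ 2 + w.im ^ 2)⁻¹ / 2) (Icc 0 1) :=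
    ContinuousOn.div_const (ContinuousOn.inv₀ (by fun_prop) fun u hu => by
      have := add_pos_of_pos_of_nonneg hw hu.1; positivity) _
  rw [trapezoidError_eq_integral hw]
  exact intervalIntegral.norm_integral_le_of_norm_le zero_le_one
    (Eventually.of_forall fun u hu => norm_trapezoidError_integrand_le (Ioc_subset_Icc_self hu))
    (hcont.intervalIntegrable_of_Icc zero_le_one)

lemma norm_trapezoidError_le (hw : 0 < w.re) : ‖trapezoidError w‖ ≤ (w.re ^ 2)⁻¹ / 2 := by
  rw [trapezoidError_eq_integral hw]
  refine (intervalIntegral.norm_integral_le_of_norm_le_const (C := (w.re ^ 2)⁻¹ / 2)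
    fun u hu => ?_).trans_eq (by simp)
  rw [uIoc_of_le zero_le_one] at hu
  refine (norm_trapezoidError_integrand_le (Ioc_subset_Icc_self hu)).trans ?_
  have := hu.1
  gcongr
  nlinarith [sq_nonneg w.im]

lemma norm_trapezoidError_le_arctan (hw : 0 < w.re) (hw' : 0 < w.im) :
    ‖trapezoidError w‖ ≤
      (Real.arctan ((w.re + 1) / w.im) - Real.arctan (w.re / w.im)) / w.im / 2 := by
  simpa [intervalIntegral.integral_div, integral_inv_add_sq_add_sq w.re hw']
    using norm_trapezoidError_le_integral hw

lemma differentiableAt_trapezoidError (hw : 0 < w.re) :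
    DifferentiableAt ℂ trapezoidError w := by
  have hw₀ : w ≠ 0 := by simpa using add_ofReal_ne_zero hw le_rfl
  have hw₁ : w + 1 ≠ 0 := by simpa using add_ofReal_ne_zero hw zero_le_one
  have hslit₀ : w ∈ slitPlane := mem_slitPlane_iff.2 (.inl hw)
  have hslit₁ : w + 1 ∈ slitPlane :=
    mem_slitPlane_iff.2 (.inl (by simpa using re_add_ofReal_pos hw zero_le_one))
  unfold trapezoidError
  fun_prop (disch := assumption)

end TrapezoidError

lemma summable_inv_add_sq (x : ℝ) : Summable fun n : ℕ => ((x + n) ^ 2)⁻¹ :=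
  ((Real.summable_one_div_nat_add_rpow x 2).2 one_lt_two).congr fun n => by
    rw [Real.rpow_two, sq_abs, one_div, add_comm]

lemma ne_neg_natCast_of_re_pos {z : ℂ} (hz : 0 < z.re) (m : ℕ) : z ≠ -m := by
  rintro rfl
  simp only [neg_re, natCast_re, Left.neg_pos_iff] at hz
  exact (Nat.cast_nonneg m).not_gt hz

lemma ψc_add_one {z : ℂ} (hz : 0 < z.re) : ψc (z + 1) = ψc z + z⁻¹ := by
  simpa only [ψc, Complex.digamma_def, logDeriv_apply] using
    Complex.digamma_apply_add_one z (ne_neg_natCast_of_re_pos hz)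

noncomputable def digammaRemainder (z : ℂ) : ℂ := ψc z - (log z - (2 * z)⁻¹)

section DigammaRemainder

variable {z : ℂ}

lemma trapezoidError_eq_sub (hz : 0 < z.re) :
    trapezoidError z = digammaRemainder z - digammaRemainder (z + 1) := by
  rw [digammaRemainder, digammaRemainder, ψc_add_one hz, trapezoidError, mul_inv, mul_inv]
  ring

lemma re_add_natCast_pos (hz : 0 < z.re) (n : ℕ) : 0 < (z + n).re := by
  simpa using re_add_ofReal_pos hz n.cast_nonneg

lemma sum_range_trapezoidError (hz : 0 < z.re) (N : ℕ) :
    ∑ n ∈ Finset.range N, trapezoidError (z + n) =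
      digammaRemainder z - digammaRemainder (z + N) := by
  have htel := Finset.sum_range_sub' (fun n : ℕ => digammaRemainder (z + n)) N
  simp only [Nat.cast_add, Nat.cast_one, ← add_assoc, Nat.cast_zero, add_zero] at htel
  rw [← htel]
  exact Finset.sum_congr rfl fun n _ => trapezoidError_eq_sub (re_add_natCast_pos hz n)

lemma summable_norm_trapezoidError (hz : 0 < z.re) :
    Summable fun n : ℕ => ‖trapezoidError (z + n)‖ :=
  ((summable_inv_add_sq z.re).div_const 2).of_nonneg_of_le (fun _ => norm_nonneg _) fun n => by
    simpa using norm_trapezoidError_le (re_add_natCast_pos hz n)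

end DigammaRemainder

local notation "γ" => Real.eulerMascheroniConstant

noncomputable def logGammaDeriv : ℝ → ℝ := deriv (Real.log ∘ Real.Gamma)

section LogGammaDeriv

variable {x : ℝ}

lemma ne_neg_natCast_of_pos (hx : 0 < x) (m : ℕ) : x ≠ -m := by
  have := ne_neg_natCast_of_re_pos (z := x) (by simpa using hx) m
  exact_mod_cast this

lemma logGammaDeriv_eq (hx : 0 < x) : logGammaDeriv x = deriv Real.Gamma x / Real.Gamma x :=
  deriv.log (Real.differentiableAt_Gamma (ne_neg_natCast_of_pos hx)) (Real.Gamma_pos_of_pos hx).ne'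

lemma ψc_ofReal (hx : 0 < x) : ψc x = logGammaDeriv x := by
  have hreal := (Real.differentiableAt_Gamma (ne_neg_natCast_of_pos hx)).hasDerivAt.ofReal_comp
  have hcomplex := (differentiableAt_Gamma (x : ℂ)
    (ne_neg_natCast_of_re_pos (by simpa using hx))).hasDerivAt.comp_ofReal
  simp only [Gamma_ofReal] at hcomplex
  rw [ψc, hcomplex.unique hreal, Gamma_ofReal, logGammaDeriv_eq hx]
  push_cast
  rfl

lemma logGammaDeriv_natCast_add_one (N : ℕ) : logGammaDeriv (N + 1) = harmonic N - γ := by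
  rw [logGammaDeriv_eq (by positivity), Real.deriv_Gamma_nat, Real.Gamma_nat_eq_factorial]
  field_simp
  ring

lemma monotoneOn_logGammaDeriv : MonotoneOn logGammaDeriv (Ioi 0) :=
  Real.convexOn_log_Gamma.monotoneOn_deriv fun _ hx =>
    (Real.differentiableAt_Gamma (ne_neg_natCast_of_pos hx)).log
      (Real.Gamma_pos_of_pos hx).ne'

lemma tendsto_logGammaDeriv_add_nat_sub_log (hx₁ : 1 ≤ x) (hx₂ : x ≤ 2) :
    Tendsto (fun N : ℕ => logGammaDeriv (x + N) - Real.log (x + N)) atTop (𝓝 0) := by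
  have hlower : Tendsto (fun N : ℕ => harmonic N - γ - Real.log (x + N)) atTop (𝓝 0) := by
    have h := (Real.tendsto_harmonic_sub_log.sub
      ((Real.tendsto_log_comp_add_sub_log x).comp tendsto_natCast_atTop_atTop)).sub_const γ
    rw [sub_zero, sub_self] at h
    refine h.congr fun N => ?_
    simp only [Function.comp_apply]
    ring_nf
  have hupper := hlower.add tendsto_one_div_add_atTop_nhds_zero_nat
  rw [add_zero] at hupper
  refine tendsto_of_tendsto_of_tendsto_of_le_of_le hlower hupper (fun N => ?_) fun N => ?_
  · have h := monotoneOn_logGammaDeriv (mem_Ioi.2 (by positivity)) (mem_Ioi.2 (by positivity))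
      (by linarith : (N : ℝ) + 1 ≤ x + N)
    rw [logGammaDeriv_natCast_add_one] at h
    linarith
  · have h := monotoneOn_logGammaDeriv (mem_Ioi.2 (by positivity)) (mem_Ioi.2 (by positivity))
      (by push_cast; linarith : x + N ≤ ((N + 1 : ℕ) : ℝ) + 1)
    rw [logGammaDeriv_natCast_add_one, harmonic_succ] at h
    push_cast at h
    simp only [one_div]
    linarith

end LogGammaDeriv

lemma tendsto_digammaRemainder_add_nat {x : ℝ} (hx₁ : 1 ≤ x) (hx₂ : x ≤ 2) :
    Tendsto (fun N : ℕ => digammaRemainder (x + N)) atTop (𝓝 0) := by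
  have hinv : Tendsto (fun N : ℕ => (2 * (x + N))⁻¹) atTop (𝓝 0) :=
    tendsto_inv_atTop_zero.comp <| Tendsto.const_mul_atTop two_pos <|
      tendsto_atTop_add_const_left _ x tendsto_natCast_atTop_atTop
  have hreal := (tendsto_logGammaDeriv_add_nat_sub_log hx₁ hx₂).add hinv
  rw [add_zero] at hreal
  have h := (continuous_ofReal.tendsto 0).comp hreal
  rw [ofReal_zero] at h
  refine h.congr fun N => ?_
  have hxN : 0 < x + N := by positivity
  rw [Function.comp_apply, ← ofReal_natCast, ← ofReal_add, digammaRemainder, ψc_ofReal hxN,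
    ← ofReal_log hxN.le]
  push_cast
  ring

lemma hasSum_trapezoidError_ofReal {x : ℝ} (hx₁ : 1 ≤ x) (hx₂ : x ≤ 2) :
    HasSum (fun n : ℕ => trapezoidError (x + n)) (digammaRemainder x) := by
  have hx : 0 < (x : ℂ).re := by simpa using zero_lt_one.trans_le hx₁
  rw [(summable_norm_trapezoidError hx).of_norm.hasSum_iff_tendsto_nat]
  simp_rw [sum_range_trapezoidError hx]
  simpa using (tendsto_digammaRemainder_add_nat hx₁ hx₂).const_sub (digammaRemainder x)

lemma differentiableAt_tsum_trapezoidError {z : ℂ} (hz : 0 < z.re) :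
    DifferentiableAt ℂ (fun w => ∑' n : ℕ, trapezoidError (w + n)) z := by
  set V : Set ℂ := {w | z.re / 2 < w.re}
  have hV : IsOpen V := isOpen_lt continuous_const continuous_re
  have hpos {w : ℂ} (hw : w ∈ V) : 0 < w.re := (half_pos hz).trans hw
  have hdiff : DifferentiableOn ℂ (fun w => ∑' n : ℕ, trapezoidError (w + n)) V := by
    refine Complex.differentiableOn_tsum_of_summable_norm
      ((summable_inv_add_sq (z.re / 2)).div_const 2) (fun n w hw => ?_) hV fun n w hw => ?_
    · exact ((differentiableAt_trapezoidError (re_add_natCast_pos (hpos hw) n)).comp w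
        (differentiableAt_id.add_const _)).differentiableWithinAt
    · refine (norm_trapezoidError_le (re_add_natCast_pos (hpos hw) n)).trans ?_
      have hw' : z.re / 2 < w.re := hw
      simp only [add_re, natCast_re]
      gcongr
  exact hdiff.differentiableAt (hV.mem_nhds (half_lt_self hz))

lemma analyticOnNhd_ψc : AnalyticOnNhd ℂ ψc {z | 0 < z.re} := by
  have hU : IsOpen {z : ℂ | 0 < z.re} := isOpen_lt continuous_const continuous_re
  have hΓ : AnalyticOnNhd ℂ Gamma {z | 0 < z.re} :=
    DifferentiableOn.analyticOnNhd (fun z hz =>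
      (differentiableAt_Gamma z (ne_neg_natCast_of_re_pos hz)).differentiableWithinAt) hU
  exact hΓ.deriv.div hΓ fun z hz => Gamma_ne_zero (ne_neg_natCast_of_re_pos hz)

theorem hasSum_trapezoidError {z : ℂ} (hz : 0 < z.re) :
    HasSum (fun n : ℕ => trapezoidError (z + n)) (digammaRemainder z) := by
  set U : Set ℂ := {w | 0 < w.re}
  have hU : IsOpen U := isOpen_lt continuous_const continuous_re
  have hsum : AnalyticOnNhd ℂ (fun w => ∑' n : ℕ, trapezoidError (w + n)) U :=
    DifferentiableOn.analyticOnNhd (fun w hw =>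
      (differentiableAt_tsum_trapezoidError hw).differentiableWithinAt) hU
  have hrem : AnalyticOnNhd ℂ digammaRemainder U := fun w hw =>
    (analyticOnNhd_ψc w hw).sub ((analyticAt_clog (mem_slitPlane_iff.2 (.inl hw))).sub
      ((analyticAt_const.mul analyticAt_id).inv
        (mul_ne_zero two_ne_zero (by simpa using add_ofReal_ne_zero hw le_rfl))))
  have hfreq : ∃ᶠ w in 𝓝[≠] ((3 / 2 : ℝ) : ℂ),
      ∑' n : ℕ, trapezoidError (w + n) = digammaRemainder w := by
    have hmaps : Tendsto ofReal (𝓝[≠] (3 / 2 : ℝ)) (𝓝[≠] ((3 / 2 : ℝ) : ℂ)) :=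
      continuous_ofReal.continuousWithinAt.tendsto_nhdsWithin fun x hx h =>
        hx (ofReal_injective h)
    have hIcc : ∀ᶠ x in 𝓝[≠] (3 / 2 : ℝ), x ∈ Icc (1 : ℝ) 2 :=
      nhdsWithin_le_nhds (Icc_mem_nhds (by norm_num) (by norm_num))
    exact hmaps.frequently
      (hIcc.mono fun x hx => (hasSum_trapezoidError_ofReal hx.1 hx.2).tsum_eq).frequently
  have heq := hsum.eqOn_of_preconnected_of_frequently_eq hrem
    (convex_halfSpace_re_gt 0).isPreconnected (by norm_num [U]) hfreq
  exact heq hz ▸ (summable_norm_trapezoidError hz).of_norm.hasSum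

theorem norm_digammaRemainder_le {z : ℂ} (hz : 0 < z.re) (hz' : 0 < z.im) :
    ‖digammaRemainder z‖ ≤ (π / 2 - Real.arctan (z.re / z.im)) / z.im / 2 :=
  (hasSum_trapezoidError hz).norm_le_of_bounded
    (((hasSum_arctan_sub_arctan z.re hz').div_const z.im).div_const 2) fun n => by
      simpa using norm_trapezoidError_le_arctan (re_add_natCast_pos hz n) (by simpa using hz')

lemma abs_re_ψc_sub_le {a Y : ℝ} (ha : 0 < a) (hY : 0 < Y) :
    |(ψc ((a + Y * I) / 2)).re -
        (Real.log (Y / 2) + Real.log (1 + (a / Y) ^ 2) / 2 - a / (a ^ 2 + Y ^ 2))| ≤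
      (π / 2 - Real.arctan (a / Y)) / Y := by
  set z : ℂ := (a + Y * I) / 2
  have hre : z.re = a / 2 := by simp [z]
  have him : z.im = Y / 2 := by simp [z]
  have hnorm : ‖z‖ = Y / 2 * √(1 + (a / Y) ^ 2) := by
    rw [norm_def, normSq_apply, hre, him, show a / 2 * (a / 2) + Y / 2 * (Y / 2) =
      (Y / 2) ^ 2 * (1 + (a / Y) ^ 2) by field_simp; ring, Real.sqrt_mul (sq_nonneg _),
      Real.sqrt_sq (by positivity)]
  have hlog : (log z).re = Real.log (Y / 2) + Real.log (1 + (a / Y) ^ 2) / 2 := by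
    rw [log_re, hnorm, Real.log_mul (by positivity) (by positivity), Real.log_sqrt (by positivity)]
  have hinv : ((2 * z)⁻¹).re = a / (a ^ 2 + Y ^ 2) := by
    have h2z : 2 * z = a + Y * I := by simp only [z]; ring
    rw [inv_re, h2z, normSq_apply]
    simp only [add_re, ofReal_re, mul_re, I_re, mul_zero, ofReal_im, I_im, mul_one, sub_self,
      add_zero, add_im, mul_im, zero_add]
    ring
  have hψ : ψc z = log z - (2 * z)⁻¹ + digammaRemainder z := by
    rw [digammaRemainder]
    ring
  have hbound :=
    norm_digammaRemainder_le (z := z) (by rw [hre]; positivity) (by rw [him]; positivity)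
  rw [hre, him, div_div_div_cancel_right₀ two_ne_zero] at hbound
  rw [hψ, add_re, sub_re, hlog, hinv, add_sub_cancel_left]
  refine (abs_re_le_norm _).trans (hbound.trans_eq ?_)
  field_simp

theorem mccurley_type_bound_general (k : ℕ) (hk : 1 ≤ k) (t : ℝ) (ht : 1 ≤ t)
    (σ : ℝ) (hσ : 1 < σ) (δ : ℝ) (hδ : δ = 0 ∨ δ = 1) :
    1 / 2 * (ψc (((σ : ℂ) + k * t * Complex.I + δ) / 2) -
        (κ : ℂ) * ψc (((σ₁ σ : ℂ) + k * t * Complex.I + δ) / 2)).re ≤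
      (1 - κ) / 2 * Real.log (k * t / 2) + Xi σ k t δ +
        1 / (2 * k) * (Real.pi / 2 - Real.arctan ((1 + δ) / k)) +
        κ / (2 * k) * (Real.pi / 2 - Real.arctan (((1 + Real.sqrt 5) / 2 + δ) / k)) := by
  have hδ₀ : 0 ≤ δ := by rcases hδ with rfl | rfl <;> norm_num
  have hk₀ : (0 : ℝ) < k := by exact_mod_cast hk
  have hkt : (k : ℝ) ≤ k * t := le_mul_of_one_le_right hk₀.le ht
  have hκ : 0 ≤ κ := by unfold κ; positivity
  have hgolden : (1 + √5) / 2 ≤ σ₁ σ := by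
    unfold σ₁
    gcongr
    nlinarith
  have hgolden₀ : 0 < (1 + √5) / 2 := by positivity
  have harg (s : ℝ) : ((s : ℂ) + k * t * I + δ) / 2 = ((s + δ : ℝ) + (k * t : ℝ) * I) / 2 := by
    push_cast
    ring
  have hY : 0 < (k : ℝ) * t := hk₀.trans_le hkt
  obtain ⟨-, h₁⟩ := abs_le.1 (abs_re_ψc_sub_le (a := σ + δ) (by linarith) hY)
  obtain ⟨h₂, -⟩ := abs_le.1 (abs_re_ψc_sub_le (a := σ₁ σ + δ) (by linarith) hY)
  have e₁ := pi_div_two_sub_arctan_div_le (a := σ + δ) hk₀ hkt (by positivity : 0 < 1 + δ)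
    (by linarith)
  have e₂ := pi_div_two_sub_arctan_div_le (a := σ₁ σ + δ) hk₀ hkt
    (by positivity : 0 < (1 + √5) / 2 + δ) (by linarith)
  rw [harg, harg, sub_re, re_ofReal_mul]
  have hXi (s : ℝ) : s / (2 * (s ^ 2 + k ^ 2 * t ^ 2)) = s / (s ^ 2 + (k * t) ^ 2) / 2 := by
    rw [mul_pow, div_div, mul_comm 2]
  have hdiv (c E : ℝ) : c / (2 * k) * E = c * (E / k) / 2 := by ring
  rw [Xi, mul_div_assoc κ, hXi, hXi, hdiv, hdiv]
  have h₂κ := mul_le_mul_of_nonneg_left h₂ hκ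
  have e₂κ := mul_le_mul_of_nonneg_left e₂ hκ
  linarith

/-- **A McCurley-type bound** for the differenced logarithmic derivative of
the Gamma factor. -/
theorem mccurley_type_bound (k : ℕ) (hk : 1 ≤ k) (t : ℝ) (ht : 1 ≤ t)
    (σ : ℝ) (hσ : 1 < σ) (hσ' : σ ≤ 1.15) (δ : ℝ) (hδ : δ = 0 ∨ δ = 1) :
    1 / 2 * (ψc (((σ : ℂ) + k * t * Complex.I + δ) / 2) -
        (κ : ℂ) * ψc (((σ₁ σ : ℂ) + k * t * Complex.I + δ) / 2)).re ≤
      (1 - κ) / 2 * Real.log (k * t / 2) + Xi σ k t δ +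
        1 / (2 * k) * (Real.pi / 2 - Real.arctan ((1 + δ) / k)) +
        κ / (2 * k) * (Real.pi / 2 - Real.arctan (((1 + Real.sqrt 5) / 2 + δ) / k)) :=
  mccurley_type_bound_general k hk t ht σ hσ δ hδ
end

section
/- For every integer k ≥ 1, every real σ with 1 ≤ σ ≤ 1.15, and every real t ≥ 1, one has Ξ(σ,k,t,0) ≤ 0; indeed, at fixed σ the function t ↦ Ξ(σ,k,t,0) is increasing for t ≥ 1 with limit 0 as t → ∞. -/
open Filter

/-!
With `x = (kt)²` and `s = σ₁ σ` one has `Ξ(σ,k,t,0) = F(σ,x) - κ F(s,x)`, where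
`F(a,x) = ¼ log(1 + a²/x) - a/(2(a² + x))`. Each `F(a,·)` tends to `0` at infinity and has
derivative `a((2-a)x - a³)/(4x(x+a²)²)`, so monotonicity on `x ≥ 1` amounts to a cubic polynomial
inequality in `x`. Written in `y = x - 1`, each of its four coefficients is nonnegative on the box
`σ ∈ [1, 1.15]`, `s ∈ [1.618, 1.754]`, `κ ∈ [0.447, 0.4473]`; those of `y²` and `y` by sign alone.
An increasing function with limit `0` is nonpositive.
-/

open Set Topology

theorem MonotoneOn.le_of_tendsto_atTop {α β : Type*} [Preorder α] [IsDirected α (· ≤ ·)]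
    [Nonempty α] [TopologicalSpace β] [Preorder β] [OrderClosedTopology β] {f : α → β} {a : α}
    {b : β} (hf : MonotoneOn f (Ici a)) (hb : Tendsto f atTop (𝓝 b)) {x : α} (hx : a ≤ x) :
    f x ≤ b :=
  ge_of_tendsto hb <| by
    filter_upwards [eventually_ge_atTop x] with y hy using hf hx (hx.trans hy) hy

lemma sq_σ₁ (σ : ℝ) : σ₁ σ ^ 2 = σ₁ σ + σ ^ 2 := by
  have h := Real.sq_sqrt (by positivity : (0 : ℝ) ≤ 1 + 4 * σ ^ 2)
  unfold σ₁
  linear_combination h / 4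

lemma σ₁_pos (σ : ℝ) : 0 < σ₁ σ := by
  unfold σ₁
  positivity

lemma σ₁_mem_Icc {σ : ℝ} (hσ : σ ∈ Icc 1 1.15) : σ₁ σ ∈ Icc 1.618 1.754 := by
  have hsq := sq_σ₁ σ
  have hpos := σ₁_pos σ
  constructor <;> nlinarith [hσ.1, hσ.2]

lemma κ_mem_Icc : κ ∈ Icc 0.447 0.4473 := by
  have h5 : Real.sqrt 5 ^ 2 = 5 := Real.sq_sqrt (by norm_num)
  have hpos : 0 < Real.sqrt 5 := by positivity
  rw [κ, mem_Icc, le_div_iff₀ hpos, div_le_iff₀ hpos]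
  constructor <;> nlinarith

noncomputable def xiTerm (a x : ℝ) : ℝ :=
  1 / 4 * Real.log (1 + a ^ 2 / x) - a / (2 * (a ^ 2 + x))

lemma Xi_zero_eq_xiTerm (σ : ℝ) (k : ℕ) (t : ℝ) :
    Xi σ k t 0 = xiTerm σ ((k * t) ^ 2) - κ * xiTerm (σ₁ σ) ((k * t) ^ 2) := by
  simp only [Xi, xiTerm, add_zero, div_pow, mul_pow]
  ring

lemma hasDerivAt_xiTerm (a : ℝ) {x : ℝ} (hx : 0 < x) :
    HasDerivAt (xiTerm a) (a * ((2 - a) * x - a ^ 3) / (4 * x * (x + a ^ 2) ^ 2)) x := by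
  have hlog : HasDerivAt (fun x => Real.log (1 + a ^ 2 / x))
      (-(a ^ 2 / x ^ 2) / (1 + a ^ 2 / x)) x := by
    have := ((hasDerivAt_inv hx.ne').const_mul (a ^ 2)).const_add 1
    simpa [div_eq_mul_inv] using this.log (by positivity)
  have hrat := (hasDerivAt_const x a).div (((hasDerivAt_id' x).const_add (a ^ 2)).const_mul 2)
    (by positivity : 2 * (a ^ 2 + x) ≠ 0)
  refine ((hlog.const_mul (1 / 4)).sub hrat).congr_deriv ?_
  field_simp
  ring

lemma tendsto_xiTerm_atTop (a : ℝ) : Tendsto (xiTerm a) atTop (𝓝 0) := by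
  have hlog : Tendsto (fun x => Real.log (1 + a ^ 2 / x)) atTop (𝓝 0) := by
    simpa using ((tendsto_const_nhds.div_atTop tendsto_id).const_add 1).log (by norm_num)
  have hrat : Tendsto (fun x => a / (2 * (a ^ 2 + x))) atTop (𝓝 0) :=
    tendsto_const_nhds.div_atTop
      ((tendsto_atTop_add_const_left _ _ tendsto_id).const_mul_atTop two_pos)
  unfold xiTerm
  simpa only [mul_zero, sub_zero] using (hlog.const_mul (1 / 4)).sub hrat

section Numerator

variable {σ s c x : ℝ}

lemma deriv_numerator_le_at_one (hσ : σ ∈ Icc 1 1.15) (hs : s ∈ Icc 1.618 1.754)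
    (hc : 0.447 ≤ c) :
    c * s * (2 - s - s ^ 3) * (1 + σ ^ 2) ^ 2 ≤ σ * (2 - σ - σ ^ 3) * (1 + s ^ 2) ^ 2 := by
  obtain ⟨h1, h2⟩ := hσ
  obtain ⟨hs1, hs2⟩ := hs
  have hcs : 2.786 ≤ c * s * (s ^ 3 + s - 2) := by
    have : 0.447 * 1.618 ≤ c * s := by nlinarith
    nlinarith [pow_le_pow_left₀ (by norm_num) hs1 3]
  have hS : (1 + s ^ 2) ^ 2 ≤ 16.62 := by nlinarith [pow_le_pow_left₀ (by linarith) hs2 2]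
  have ha : 0 ≤ σ * (σ ^ 3 + σ - 2) := by nlinarith [one_le_pow₀ (n := 3) h1]
  have hpoly : 16.62 * (σ * (σ ^ 3 + σ - 2)) ≤ 2.786 * (1 + σ ^ 2) ^ 2 := by
    nlinarith [mul_nonneg (sub_nonneg.2 h1) (sub_nonneg.2 h2)]
  have := calc σ * (σ ^ 3 + σ - 2) * (1 + s ^ 2) ^ 2
      _ ≤ σ * (σ ^ 3 + σ - 2) * 16.62 := by gcongr
      _ ≤ 2.786 * (1 + σ ^ 2) ^ 2 := by linarith
      _ ≤ c * s * (s ^ 3 + s - 2) * (1 + σ ^ 2) ^ 2 := by gcongr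
  linarith

lemma deriv_numerator_le (hσ : σ ∈ Icc 1 1.15) (hs : s ∈ Icc 1.618 1.754)
    (hc : c ∈ Icc 0.447 0.4473) (hx : 1 ≤ x) :
    c * s * ((2 - s) * x - s ^ 3) * (x + σ ^ 2) ^ 2 ≤
      σ * ((2 - σ) * x - σ ^ 3) * (x + s ^ 2) ^ 2 := by
  have e0 := deriv_numerator_le_at_one hσ hs hc.1
  obtain ⟨h1, h2⟩ := hσ
  obtain ⟨hs1, hs2⟩ := hs
  obtain ⟨hc1, hc2⟩ := hc
  obtain ⟨y, hy, rfl⟩ : ∃ y, 0 ≤ y ∧ x = 1 + y := ⟨x - 1, by linarith, by ring⟩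
  have hσ3 : σ ^ 3 ≤ 1.520875 := by nlinarith [pow_le_pow_left₀ (by linarith) h2 3]
  have hs3 : 4.235 ≤ s ^ 3 := by nlinarith [pow_le_pow_left₀ (by norm_num) hs1 3]
  have hcs : 0 ≤ c * s := by positivity
  have e3 : c * s * (2 - s) ≤ σ * (2 - σ) := by
    nlinarith [mul_nonneg (sub_nonneg.2 hs1) (sub_nonneg.2 hs2)]
  have e2 : c * s * (2 * (2 - s) * (1 + σ ^ 2) + (2 - s - s ^ 3)) ≤
      σ * (2 * (2 - σ) * (1 + s ^ 2) + (2 - σ - σ ^ 3)) := by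
    have hr : 2 * (2 - s) * (1 + σ ^ 2) + (2 - s - s ^ 3) ≤ 0 := by
      nlinarith [mul_nonneg (sub_nonneg.2 hs1) (sq_nonneg σ)]
    have hl : 0 ≤ 2 * (2 - σ) * (1 + s ^ 2) + (2 - σ - σ ^ 3) := by
      nlinarith [mul_nonneg (sub_nonneg.2 h2) (sq_nonneg s)]
    nlinarith [mul_nonpos_of_nonneg_of_nonpos hcs hr]
  have e1 : c * s * ((1 + σ ^ 2) * ((2 - s) * (1 + σ ^ 2) + 2 * (2 - s - s ^ 3))) ≤
      σ * ((1 + s ^ 2) * ((2 - σ) * (1 + s ^ 2) + 2 * (2 - σ - σ ^ 3))) := by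
    have hr : (2 - s) * (1 + σ ^ 2) + 2 * (2 - s - s ^ 3) ≤ 0 := by
      nlinarith [mul_nonneg (sub_nonneg.2 hs1) (sq_nonneg σ)]
    have hl : 0 ≤ (2 - σ) * (1 + s ^ 2) + 2 * (2 - σ - σ ^ 3) := by
      nlinarith [mul_nonneg (sub_nonneg.2 h2) (sq_nonneg s)]
    have hT : (0 : ℝ) ≤ 1 + σ ^ 2 := by positivity
    have hS : (0 : ℝ) ≤ 1 + s ^ 2 := by positivity
    nlinarith [mul_nonpos_of_nonneg_of_nonpos (mul_nonneg hcs hT) hr, mul_nonneg hS hl]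
  nlinarith [mul_le_mul_of_nonneg_right e3 (pow_nonneg hy 3),
    mul_le_mul_of_nonneg_right e2 (pow_nonneg hy 2), mul_le_mul_of_nonneg_right e1 hy]

end Numerator

lemma monotoneOn_xiTerm_sub {σ : ℝ} (hσ : σ ∈ Icc 1 1.15) :
    MonotoneOn (fun x => xiTerm σ x - κ * xiTerm (σ₁ σ) x) (Ici 1) := by
  have hderiv (x : ℝ) (hx : 0 < x) :=
    (hasDerivAt_xiTerm σ hx).sub ((hasDerivAt_xiTerm (σ₁ σ) hx).const_mul κ)
  refine monotoneOn_of_hasDerivWithinAt_nonneg (convex_Ici 1)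
    (fun x hx => (hderiv x (by simp at hx; linarith)).continuousAt.continuousWithinAt)
    (fun x hx => (hderiv x (by simp at hx; linarith)).hasDerivWithinAt) fun x hx => ?_
  rw [interior_Ici, mem_Ioi] at hx
  have hnum := deriv_numerator_le hσ (σ₁_mem_Icc hσ) κ_mem_Icc hx.le
  rw [sub_nonneg, ← mul_div_assoc, div_le_div_iff₀ (by positivity) (by positivity)]
  linarith [mul_le_mul_of_nonneg_left hnum (by positivity : (0 : ℝ) ≤ 4 * x)]

/-- For `k ≥ 1`, `1 ≤ σ ≤ 1.15` and `t ≥ 1`: `Ξ(σ,k,t,0) ≤ 0`; indeed at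
fixed `σ` the map `t ↦ Ξ(σ,k,t,0)` is increasing on `t ≥ 1` with limit `0`
as `t → ∞`. -/
theorem Xi_delta_zero_nonpos (k : ℕ) (hk : 1 ≤ k) (σ : ℝ)
    (hσ : 1 ≤ σ) (hσ' : σ ≤ 1.15) :
    (∀ t : ℝ, 1 ≤ t → Xi σ k t 0 ≤ 0) ∧
    MonotoneOn (fun t => Xi σ k t 0) (Set.Ici 1) ∧
    Tendsto (fun t => Xi σ k t 0) atTop (nhds 0) := by
  have hXi : (fun t => Xi σ k t 0) =
      (fun x => xiTerm σ x - κ * xiTerm (σ₁ σ) x) ∘ fun t => (k * t) ^ 2 :=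
    funext fun t => Xi_zero_eq_xiTerm σ k t
  have hk' : (1 : ℝ) ≤ k := by exact_mod_cast hk
  have hsq_mono : MonotoneOn (fun t : ℝ => (k * t) ^ 2) (Ici 1) := fun a ha _ _ hab =>
    pow_le_pow_left₀ (mul_nonneg k.cast_nonneg (zero_le_one.trans ha))
      (mul_le_mul_of_nonneg_left hab k.cast_nonneg) 2
  have hsq_maps : MapsTo (fun t : ℝ => (k * t) ^ 2) (Ici 1) (Ici 1) := fun t ht =>
    one_le_pow₀ (one_le_mul_of_one_le_of_one_le hk' ht)
  have hsq_lim : Tendsto (fun t : ℝ => (k * t) ^ 2) atTop atTop :=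
    (tendsto_pow_atTop two_ne_zero).comp (tendsto_id.const_mul_atTop (by positivity))
  have hmono : MonotoneOn (fun t => Xi σ k t 0) (Ici 1) :=
    hXi ▸ (monotoneOn_xiTerm_sub ⟨hσ, hσ'⟩).comp hsq_mono hsq_maps
  have hlim : Tendsto (fun t => Xi σ k t 0) atTop (𝓝 0) := by
    rw [hXi]
    simpa using ((tendsto_xiTerm_atTop σ).sub
      ((tendsto_xiTerm_atTop (σ₁ σ)).const_mul κ)).comp hsq_lim
  exact ⟨fun t ht => hmono.le_of_tendsto_atTop hlim ht, hmono, hlim⟩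
end

section
/- Let d₁ > 0 and r > 0 be real numbers with r² ≥ d₁²·(1 + (1-κ)r/2)², and let c > 0 satisfy c ≥ (√(r² - d₁²(1 + (1-κ)r/2)²) - (1-κ)r²/2) / (1 + (1-κ)r/2). Then 1/r - 2(r+c)/((r+c)² + d₁²) + (1-κ)/2 ≥ 0. Moreover, for d₁ = 1.0015 and r = 2.1163, the smallest such c, namely c_A = (√(r² - d₁²(1 + (1-κ)r/2)²) - (1-κ)r²/2)/(1 + (1-κ)r/2), satisfies c_A ≥ 1/9.7946. -/
lemma κ_lt_one : κ < 1 := by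
  unfold κ
  rw [div_lt_one (Real.sqrt_pos.2 (by norm_num))]
  exact Real.lt_sqrt_of_sq_lt (by norm_num)

lemma le_κ : (0.44721359 : ℝ) ≤ κ := by
  unfold κ
  rw [le_div_iff₀ (Real.sqrt_pos.2 (by norm_num))]
  have : Real.sqrt 5 ≤ 2.236068 := Real.sqrt_le_iff.2 ⟨by norm_num, by norm_num⟩
  linarith

lemma two_mul_mul_le_mul_sq_add_sq_of_sqrt_le {a r x d : ℝ} (ha : 0 < a)
    (h : Real.sqrt (r ^ 2 - d ^ 2 * a ^ 2) ≤ a * x - r) :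
    2 * r * x ≤ a * (x ^ 2 + d ^ 2) := by
  obtain ⟨-, hsq⟩ := Real.sqrt_le_iff.1 h
  have hmul : a * (2 * r * x) ≤ a * (a * (x ^ 2 + d ^ 2)) := by
    nlinarith [show a * (a * (x ^ 2 + d ^ 2)) - a * (2 * r * x) =
      (a * x - r) ^ 2 - (r ^ 2 - d ^ 2 * a ^ 2) by ring]
  exact le_of_mul_le_mul_left hmul ha

lemma two_mul_div_sq_add_sq_le_of_sqrt_le {a r x d : ℝ} (ha : 0 < a) (hr : 0 < r) (hx : 0 < x)
    (h : Real.sqrt (r ^ 2 - d ^ 2 * a ^ 2) ≤ a * x - r) :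
    2 * x / (x ^ 2 + d ^ 2) ≤ a / r := by
  rw [div_le_div_iff₀ (by positivity) hr]
  linarith [two_mul_mul_le_mul_sq_add_sq_of_sqrt_le ha h]

/-- If `d₁, r > 0` with `r² ≥ d₁²(1 + (1-κ)r/2)²` and
`c ≥ (√(r² - d₁²(1+(1-κ)r/2)²) - (1-κ)r²/2)/(1 + (1-κ)r/2)`, `c > 0`, then
`1/r - 2(r+c)/((r+c)² + d₁²) + (1-κ)/2 ≥ 0`; moreover for `d₁ = 1.0015` and
`r = 2.1163` the smallest such `c` satisfies `c_A ≥ 1/9.7946`. -/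
theorem region_A_bound :
    (∀ d₁ r c : ℝ, 0 < d₁ → 0 < r → 0 < c →
      d₁ ^ 2 * (1 + (1 - κ) * r / 2) ^ 2 ≤ r ^ 2 →
      (Real.sqrt (r ^ 2 - d₁ ^ 2 * (1 + (1 - κ) * r / 2) ^ 2) -
          (1 - κ) * r ^ 2 / 2) / (1 + (1 - κ) * r / 2) ≤ c →
      0 ≤ 1 / r - 2 * (r + c) / ((r + c) ^ 2 + d₁ ^ 2) + (1 - κ) / 2) ∧
    1 / 9.7946 ≤
      (Real.sqrt (2.1163 ^ 2 - 1.0015 ^ 2 * (1 + (1 - κ) * 2.1163 / 2) ^ 2) -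
          (1 - κ) * 2.1163 ^ 2 / 2) / (1 + (1 - κ) * 2.1163 / 2) := by
  constructor
  · intro d₁ r c _ hr hc _ hc_ge
    set a := 1 + (1 - κ) * r / 2 with ha
    have ha_pos : 0 < a := by nlinarith [mul_pos (sub_pos.2 κ_lt_one) hr]
    have hsqrt : Real.sqrt (r ^ 2 - d₁ ^ 2 * a ^ 2) ≤ a * (r + c) - r := by
      rw [div_le_iff₀ ha_pos] at hc_ge
      linarith [show (1 - κ) * r ^ 2 / 2 = (a - 1) * r by rw [ha]; ring]
    have hsplit : 1 / r + (1 - κ) / 2 = a / r := by rw [ha]; field_simp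
    linarith [two_mul_div_sq_add_sq_le_of_sqrt_le ha_pos hr (by positivity) hsqrt]
  · set a := 1 + (1 - κ) * 2.1163 / 2 with ha
    have ha_pos : 0 < a := by linarith [κ_lt_one]
    have ha_le : a ≤ 1 + (1 - 0.44721359) * 2.1163 / 2 := by linarith [le_κ]
    have hsqrt : 1.3997063 ≤ Real.sqrt (2.1163 ^ 2 - 1.0015 ^ 2 * a ^ 2) :=
      Real.le_sqrt_of_sq_le (by nlinarith)
    rw [le_div_iff₀ ha_pos]
    linarith [le_κ]
end
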